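/- arXiv:1607.01993 — 2 statements merged into one kernel-verified Lean document; each statement's English description precedes it below -/
import Mathlib

section
/- Let A be a quantifier-free symbolic heap and let B = ∃z⃗. Q with Q quantifier-free, where no variable of z⃗ occurs on the right-hand side of any points-to formula in Q. Then the biabduction problem (A, B) has a solution (quantifier-free X, Y with A*X satisfiable and A*X ⊨ B*Y) if and only if the biabduction problem (A, Q) has a solution. -/
/-! ## Array separation logic (ASL): syntax and stack-heap semantics -/

/-- Terms of array separation logic: variables (named by naturals), constants,
addition, and multiplication by a constant. -/
inductive Trm : Type where
  | var : ℕ → Trm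
  | const : ℕ → Trm
  | add : Trm → Trm → Trm
  | smul : ℕ → Trm → Trm

/-- A stack maps variables to naturals. -/
abbrev Stack := ℕ → ℕ

/-- Evaluation of terms under a stack. -/
def Trm.eval (s : Stack) : Trm → ℕ
  | .var x => s x
  | .const n => n
  | .add t u => t.eval s + u.eval s
  | .smul n t => n * t.eval s

/-- Variables occurring in a term. -/
def Trm.vars : Trm → Set ℕ
  | .var x => {x}
  | .const _ => ∅
  | .add t u => t.vars ∪ u.vars
  | .smul _ t => t.vars

/-- Pure formulas: conjunctions of atomic arithmetic constraints. -/
inductive PureF : Type where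
  | tru : PureF
  | eq : Trm → Trm → PureF
  | ne : Trm → Trm → PureF
  | le : Trm → Trm → PureF
  | lt : Trm → Trm → PureF
  | and : PureF → PureF → PureF

/-- Satisfaction of pure formulas (depends only on the stack). -/
def PureF.sat (s : Stack) : PureF → Prop
  | .tru => True
  | .eq t u => t.eval s = u.eval s
  | .ne t u => t.eval s ≠ u.eval s
  | .le t u => t.eval s ≤ u.eval s
  | .lt t u => t.eval s < u.eval s
  | .and p q => p.sat s ∧ q.sat s

def PureF.vars : PureF → Set ℕ
  | .tru => ∅
  | .eq t u => t.vars ∪ u.vars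
  | .ne t u => t.vars ∪ u.vars
  | .le t u => t.vars ∪ u.vars
  | .lt t u => t.vars ∪ u.vars
  | .and p q => p.vars ∪ q.vars

/-- The (top-level) terms occurring in a pure formula. -/
def PureF.trms : PureF → List Trm
  | .tru => []
  | .eq t u => [t, u]
  | .ne t u => [t, u]
  | .le t u => [t, u]
  | .lt t u => [t, u]
  | .and p q => p.trms ++ q.trms

/-- The conjuncts of a pure formula. -/
def PureF.conjuncts : PureF → List PureF
  | .and p q => p.conjuncts ++ q.conjuncts
  | p => [p]

/-- Finite conjunction. -/
def bigAnd : List PureF → PureF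
  | [] => .tru
  | p :: ps => .and p (bigAnd ps)

/-- Spatial formulas: `emp`, points-to, arrays, and separating conjunction. -/
inductive Spatial : Type where
  | emp : Spatial
  | pto : Trm → Trm → Spatial
  | arr : Trm → Trm → Spatial
  | star : Spatial → Spatial → Spatial

/-- Heaps: finite partial functions from ℕ (locations) to ℕ (values). -/
abbrev Heap := Finmap (fun _ : ℕ => ℕ)

/-- Satisfaction of spatial formulas. -/
def Spatial.sat (s : Stack) : Spatial → Heap → Prop
  | .emp, h => h = ∅
  | .pto t u, h =>
      h.keys = {Trm.eval s t} ∧ Finmap.lookup (Trm.eval s t) h = some (Trm.eval s u)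
  | .arr t u, h =>
      Trm.eval s t ≤ Trm.eval s u ∧ h.keys = Finset.Icc (Trm.eval s t) (Trm.eval s u)
  | .star F G, h =>
      ∃ h₁ h₂ : Heap, h₁.Disjoint h₂ ∧ h = h₁ ∪ h₂ ∧ F.sat s h₁ ∧ G.sat s h₂

def Spatial.vars : Spatial → Set ℕ
  | .emp => ∅
  | .pto t u => t.vars ∪ u.vars
  | .arr t u => t.vars ∪ u.vars
  | .star F G => F.vars ∪ G.vars

/-- The (top-level) terms occurring in a spatial formula. -/
def Spatial.trms : Spatial → List Trm
  | .emp => []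
  | .pto t u => [t, u]
  | .arr t u => [t, u]
  | .star F G => F.trms ++ G.trms

/-- The points-to atoms of a spatial formula, as (address, value) pairs. -/
def Spatial.ptos : Spatial → List (Trm × Trm)
  | .emp => []
  | .pto t u => [(t, u)]
  | .arr _ _ => []
  | .star F G => F.ptos ++ G.ptos

/-- The array atoms of a spatial formula, as endpoint pairs. -/
def Spatial.arrs : Spatial → List (Trm × Trm)
  | .emp => []
  | .pto _ _ => []
  | .arr t u => [(t, u)]
  | .star F G => F.arrs ++ G.arrs

/-- The arrays of the array abstraction `⟨A⟩`: each points-to `c ↦ d` is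
replaced by the single-cell array `array(c,c)`. -/
def Spatial.absArrays : Spatial → List (Trm × Trm)
  | .emp => []
  | .pto t _ => [(t, t)]
  | .arr t u => [(t, u)]
  | .star F G => F.absArrays ++ G.absArrays

/-- Finite separating conjunction. -/
def bigStar : List Spatial → Spatial
  | [] => .emp
  | F :: Fs => .star F (bigStar Fs)

/-- Quantifier-free symbolic heaps `Π : F`. -/
structure SymHeap : Type where
  pure : PureF
  spatial : Spatial

/-- Satisfaction of quantifier-free symbolic heaps. -/
def SymHeap.sat (s : Stack) (h : Heap) (A : SymHeap) : Prop :=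
  A.pure.sat s ∧ A.spatial.sat s h

def SymHeap.vars (A : SymHeap) : Set ℕ := A.pure.vars ∪ A.spatial.vars

/-- All (top-level) terms occurring in a symbolic heap. -/
def SymHeap.trms (A : SymHeap) : List Trm := A.pure.trms ++ A.spatial.trms

/-- Lifting `*` to symbolic heaps: conjoin pure parts, `*`-conjoin spatial parts. -/
def SymHeap.star (A X : SymHeap) : SymHeap :=
  ⟨.and A.pure X.pure, .star A.spatial X.spatial⟩

/-- Satisfiability of a symbolic heap. -/
def SymHeap.Satisfiable (A : SymHeap) : Prop := ∃ (s : Stack) (h : Heap), A.sat s h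

/-- Semantic entailment between quantifier-free symbolic heaps. -/
def Entails (A B : SymHeap) : Prop := ∀ (s : Stack) (h : Heap), A.sat s h → B.sat s h

/-- Existentially quantified symbolic heaps `∃ z⃗. Π : F`. -/
structure QSymHeap : Type where
  bound : List ℕ
  body : SymHeap

/-- Satisfaction of quantified symbolic heaps: some extension of the stack on the
bound variables satisfies the body. -/
def QSymHeap.sat (s : Stack) (h : Heap) (B : QSymHeap) : Prop :=
  ∃ s' : Stack, (∀ x : ℕ, x ∉ B.bound → s' x = s x) ∧ B.body.sat s' h

/-! ## The arithmetic encodings γ, β, φ, ψ₁, ψ₂, χ (interpreted over stacks) -/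

/-- `s ⊨ γ(A)`: the Presburger satisfiability encoding of `A`, i.e. the pure part
of `A` together with well-definedness and pairwise disjointness of the arrays of
the array abstraction `⟨A⟩`. -/
def gammaSat (A : SymHeap) (s : Stack) : Prop :=
  A.pure.sat s ∧
  (∀ p ∈ A.spatial.absArrays, Trm.eval s p.1 ≤ Trm.eval s p.2) ∧
  A.spatial.absArrays.Pairwise (fun p q =>
    Trm.eval s p.2 < Trm.eval s q.1 ∨ Trm.eval s q.2 < Trm.eval s p.1)

/-- `s ⊨ β(A,B)`. -/
def betaSat (A B : SymHeap) (s : Stack) : Prop :=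
  gammaSat A s ∧ gammaSat B s ∧
  (∀ p ∈ B.spatial.ptos, ∀ q ∈ A.spatial.arrs,
      Trm.eval s p.1 < Trm.eval s q.1 ∨ Trm.eval s p.1 > Trm.eval s q.2) ∧
  (∀ p ∈ A.spatial.ptos, ∀ q ∈ B.spatial.ptos,
      Trm.eval s p.1 ≠ Trm.eval s q.1 ∨ Trm.eval s p.2 = Trm.eval s q.2)

/-- The term set `Terms(A,B)`: all terms occurring in `A` and `B`, together with
the successor terms `b_i + 1`, `d_i + 1` (array right endpoints) and
`t_i + 1`, `v_i + 1` (points-to addresses). -/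
def termSet (A B : SymHeap) : List Trm :=
  A.trms ++ B.trms ++
  (A.spatial.arrs.map fun p => Trm.add p.2 (Trm.const 1)) ++
  (B.spatial.arrs.map fun p => Trm.add p.2 (Trm.const 1)) ++
  (A.spatial.ptos.map fun p => Trm.add p.1 (Trm.const 1)) ++
  (B.spatial.ptos.map fun p => Trm.add p.1 (Trm.const 1))

/-- A solution seed for the biabduction instance `(A,B)`. -/
def IsSolutionSeed (A B : SymHeap) (Δ : PureF) : Prop :=
  (∃ s : Stack, Δ.sat s) ∧
  (∀ s : Stack, Δ.sat s → betaSat A B s) ∧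
  (∀ δ ∈ Δ.conjuncts, ∃ t ∈ termSet A B, ∃ u ∈ termSet A B,
      δ = PureF.lt t u ∨ δ = PureF.eq t u) ∧
  (∀ t ∈ termSet A B, ∀ u ∈ termSet A B, ∃ δ ∈ Δ.conjuncts,
      δ = PureF.lt t u ∨ δ = PureF.lt u t ∨ δ = PureF.eq t u)

/-- The (quantifier-free) biabduction problem `(A,B)` has a solution. -/
def HasBiabductionSolution (A B : SymHeap) : Prop :=
  ∃ X Y : SymHeap, (A.star X).Satisfiable ∧ Entails (A.star X) (B.star Y)

/-- `s ⊨ φ(A,B)` (over the array abstractions of `A` and `B`). -/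
def phiSat (A B : SymHeap) (s : Stack) : Prop :=
  ∃ x : ℕ,
    (∃ p ∈ A.spatial.absArrays, Trm.eval s p.1 ≤ x ∧ x ≤ Trm.eval s p.2) ∧
    ∀ q ∈ B.spatial.absArrays, x < Trm.eval s q.1 ∨ x > Trm.eval s q.2

/-- `s ⊨ ψ₁(A,B)`: some points-to address of `B` is covered by an array of `A`. -/
def psi1Sat (A B : SymHeap) (s : Stack) : Prop :=
  ∃ p ∈ A.spatial.arrs, ∃ q ∈ B.spatial.ptos,
    Trm.eval s p.1 ≤ Trm.eval s q.1 ∧ Trm.eval s q.1 ≤ Trm.eval s p.2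

/-- `s ⊨ ψ₂(A,B)`: some pointers of `A` and `B` share an address but disagree on
their contents. -/
def psi2Sat (A B : SymHeap) (s : Stack) : Prop :=
  ∃ p ∈ A.spatial.ptos, ∃ q ∈ B.spatial.ptos,
    Trm.eval s p.1 = Trm.eval s q.1 ∧ Trm.eval s p.2 ≠ Trm.eval s q.2

/-- `s ⊨ χ(A, ∃z⃗.Q)`. -/
def chiSat (A : SymHeap) (zs : List ℕ) (Q : SymHeap) (s : Stack) : Prop :=
  gammaSat A s ∧
  ∀ s' : Stack, (∀ x : ℕ, x ∉ zs → s' x = s x) →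
    (¬ gammaSat Q s' ∨ phiSat A Q s' ∨ phiSat Q A s' ∨
      psi1Sat A Q s' ∨ psi2Sat A Q s')

/-!
Let `X, Y` solve `(A, ∃z⃗. Q)` without mentioning `z⃗`, and let `(s₀, h₀)` be a model of
`A * X`. Overwrite every cell of `h₀` that is not the address of a points-to of `A * X` with a
value `v` that no points-to right-hand side of `Q * Y` takes under `s₀`. The new heap still
models `A * X`, so some `s₂` agreeing with `s₀` off `z⃗` makes it a model of `Q * Y`.
Strengthening `X` by the equations `x = s₂ x` for all variables `x` of `A, X, Q, Y` yields a
solution of `(A, Q)`: every model `(s, h)` of the strengthened `A * X` turns into that same heap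
under the same overwriting, and no points-to of `Q * Y` can sit on an overwritten cell, because
its right-hand side is free of `z⃗` and hence never evaluates to `v`.

Conversely, replacing each `z ∈ z⃗` in a solution of `(A, Q)` by its value in a model of `A * X`
gives a solution of `(A, ∃z⃗. Q)` that does not mention `z⃗`.
-/

namespace Trm

variable {s s' : Stack} {σ : ℕ → Trm}

theorem eval_congr {t : Trm} (h : ∀ x ∈ t.vars, s x = s' x) : t.eval s = t.eval s' := by
  induction t <;> simp_all [eval, vars, or_imp, forall_and]

theorem finite_vars (t : Trm) : t.vars.Finite := by
  induction t <;> simp_all [vars]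

def subst (σ : ℕ → Trm) : Trm → Trm
  | .var x => σ x
  | .const n => .const n
  | .add t u => .add (t.subst σ) (u.subst σ)
  | .smul n t => .smul n (t.subst σ)

theorem eval_subst (t : Trm) : (t.subst σ).eval s = t.eval fun x => (σ x).eval s := by
  induction t <;> simp_all [subst, eval]

theorem vars_subst_subset (t : Trm) : (t.subst σ).vars ⊆ ⋃ x, (σ x).vars := by
  induction t with
  | var x => exact Set.subset_iUnion (fun x => (σ x).vars) x
  | const _ => exact Set.empty_subset _
  | add t u iht ihu => exact Set.union_subset iht ihu
  | smul _ t ih => exact ih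

end Trm

namespace PureF

variable {s s' : Stack} {σ : ℕ → Trm}

theorem sat_congr {p : PureF} (h : ∀ x ∈ p.vars, s x = s' x) : p.sat s ↔ p.sat s' := by
  induction p with
  | tru => rfl
  | and p q ihp ihq =>
    exact and_congr (ihp fun x hx => h x (.inl hx)) (ihq fun x hx => h x (.inr hx))
  | eq t u | ne t u | le t u | lt t u =>
    simp only [sat, Trm.eval_congr fun x hx => h x (.inl hx),
      Trm.eval_congr fun x hx => h x (.inr hx)]

theorem finite_vars (p : PureF) : p.vars.Finite := by
  induction p <;> simp_all [vars, Trm.finite_vars]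

def subst (σ : ℕ → Trm) : PureF → PureF
  | .tru => .tru
  | .eq t u => .eq (t.subst σ) (u.subst σ)
  | .ne t u => .ne (t.subst σ) (u.subst σ)
  | .le t u => .le (t.subst σ) (u.subst σ)
  | .lt t u => .lt (t.subst σ) (u.subst σ)
  | .and p q => .and (p.subst σ) (q.subst σ)

theorem sat_subst (p : PureF) : (p.subst σ).sat s ↔ p.sat fun x => (σ x).eval s := by
  induction p <;> simp_all [subst, sat, Trm.eval_subst]

theorem vars_subst_subset (p : PureF) : (p.subst σ).vars ⊆ ⋃ x, (σ x).vars := by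
  induction p <;>
    simp_all [subst, vars, Set.union_subset_iff, Trm.vars_subst_subset]

end PureF

namespace Spatial

variable {s s' : Stack} {σ : ℕ → Trm}

theorem sat_congr {F : Spatial} {h : Heap} (hs : ∀ x ∈ F.vars, s x = s' x) :
    F.sat s h ↔ F.sat s' h := by
  induction F generalizing h with
  | emp => rfl
  | star F G ihF ihG =>
    simp only [sat, ihF fun x hx => hs x (.inl hx), ihG fun x hx => hs x (.inr hx)]
  | pto t u | arr t u =>
    rw [sat, sat, Trm.eval_congr fun x hx => hs x (.inl hx),
      Trm.eval_congr fun x hx => hs x (.inr hx)]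

theorem finite_vars (F : Spatial) : F.vars.Finite := by
  induction F <;> simp_all [vars, Trm.finite_vars]

def subst (σ : ℕ → Trm) : Spatial → Spatial
  | .emp => .emp
  | .pto t u => .pto (t.subst σ) (u.subst σ)
  | .arr t u => .arr (t.subst σ) (u.subst σ)
  | .star F G => .star (F.subst σ) (G.subst σ)

theorem sat_subst {h : Heap} (F : Spatial) :
    (F.subst σ).sat s h ↔ F.sat (fun x => (σ x).eval s) h := by
  induction F generalizing h with
  | emp => rfl
  | star F G ihF ihG => simp only [subst, sat, ihF, ihG]
  | pto t u | arr t u => rw [subst, sat, sat, Trm.eval_subst, Trm.eval_subst]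

theorem vars_subst_subset (F : Spatial) : (F.subst σ).vars ⊆ ⋃ x, (σ x).vars := by
  induction F <;> simp_all [subst, vars, Set.union_subset_iff, Trm.vars_subst_subset]

theorem vars_of_mem_ptos {F : Spatial} {p : Trm × Trm} (hp : p ∈ F.ptos) :
    p.1.vars ⊆ F.vars ∧ p.2.vars ⊆ F.vars := by
  induction F with
  | emp | arr _ _ => simp [ptos] at hp
  | pto t u =>
    obtain rfl : p = (t, u) := List.mem_singleton.1 hp
    exact ⟨Set.subset_union_left, Set.subset_union_right⟩
  | star F G ihF ihG =>
    rcases List.mem_append.1 hp with hp | hp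
    · exact (ihF hp).imp (·.trans Set.subset_union_left) (·.trans Set.subset_union_left)
    · exact (ihG hp).imp (·.trans Set.subset_union_right) (·.trans Set.subset_union_right)

end Spatial

namespace SymHeap

theorem sat_congr {A : SymHeap} {s s' : Stack} {h : Heap} (hs : ∀ x ∈ A.vars, s x = s' x) :
    A.sat s h ↔ A.sat s' h :=
  and_congr (PureF.sat_congr fun x hx => hs x (.inl hx))
    (Spatial.sat_congr fun x hx => hs x (.inr hx))

theorem finite_vars (A : SymHeap) : A.vars.Finite :=
  A.pure.finite_vars.union A.spatial.finite_vars

theorem vars_star (A X : SymHeap) : (A.star X).vars = A.vars ∪ X.vars := by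
  simp only [vars, star, PureF.vars, Spatial.vars]
  exact Set.union_union_union_comm _ _ _ _

def subst (σ : ℕ → Trm) (A : SymHeap) : SymHeap :=
  ⟨A.pure.subst σ, A.spatial.subst σ⟩

theorem vars_subst_subset (σ : ℕ → Trm) (A : SymHeap) : (A.subst σ).vars ⊆ ⋃ x, (σ x).vars :=
  Set.union_subset (A.pure.vars_subst_subset) (A.spatial.vars_subst_subset)

theorem sat_star_subst {A X : SymHeap} {σ : ℕ → Trm} {s : Stack} {h : Heap}
    (hA : ∀ x ∈ A.vars, (σ x).eval s = s x) :
    (A.star (X.subst σ)).sat s h ↔ (A.star X).sat (fun x => (σ x).eval s) h := by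
  have hpure := PureF.sat_congr (p := A.pure) fun x hx => (hA x (.inl hx)).symm
  have hspatial := fun h => Spatial.sat_congr (F := A.spatial) (h := h)
    fun x hx => (hA x (.inr hx)).symm
  simp only [sat, star, subst, PureF.sat, Spatial.sat, PureF.sat_subst, Spatial.sat_subst,
    hpure, hspatial]

def andPure (X : SymHeap) (π : PureF) : SymHeap := ⟨π.and X.pure, X.spatial⟩

theorem sat_star_andPure {A X : SymHeap} {π : PureF} {s : Stack} {h : Heap} :
    (A.star (X.andPure π)).sat s h ↔ π.sat s ∧ (A.star X).sat s h := by
  simp only [sat, star, andPure, PureF.sat]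
  tauto

end SymHeap

def constSubst (zs : List ℕ) (c : Stack) (x : ℕ) : Trm :=
  if x ∈ zs then .const (c x) else .var x

theorem eval_constSubst {zs : List ℕ} {c s : Stack} {x : ℕ} :
    (constSubst zs c x).eval s = if x ∈ zs then c x else s x := by
  unfold constSubst; split_ifs <;> rfl

theorem notMem_vars_subst_constSubst {zs : List ℕ} {c : Stack} {z : ℕ} (hz : z ∈ zs)
    (A : SymHeap) : z ∉ (A.subst (constSubst zs c)).vars := fun hA => by
  obtain ⟨x, hx⟩ := Set.mem_iUnion.1 (A.vars_subst_subset _ hA)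
  unfold constSubst at hx
  split_ifs at hx with hxz
  · exact hx
  · exact hxz (Set.mem_singleton_iff.1 hx ▸ hz)

theorem sat_bigAnd {s : Stack} {ps : List PureF} : (bigAnd ps).sat s ↔ ∀ p ∈ ps, p.sat s := by
  induction ps <;> simp_all [bigAnd, PureF.sat]

noncomputable def pinned (V : Finset ℕ) (c : Stack) : PureF :=
  bigAnd (V.toList.map fun x => .eq (.var x) (.const (c x)))

theorem sat_pinned {V : Finset ℕ} {c s : Stack} : (pinned V c).sat s ↔ ∀ x ∈ V, s x = c x := by
  simp [pinned, sat_bigAnd, PureF.sat, Trm.eval]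

namespace Heap

def ofFun (K : Finset ℕ) (f : ℕ → ℕ) : Heap :=
  Finmap.keysLookupEquiv.symm
    ⟨(K, fun k => if k ∈ K then some (f k) else none),
      fun k => by by_cases hk : k ∈ K <;> simp [hk]⟩

def restrict (h : Heap) (K : Finset ℕ) : Heap :=
  ofFun K fun k => (h.lookup k).getD 0

def overwriteExcept (h : Heap) (keep : List ℕ) (v : ℕ) : Heap :=
  ofFun h.keys fun k => if k ∈ keep then (h.lookup k).getD 0 else v

variable {K K₁ K₂ : Finset ℕ} {f : ℕ → ℕ} {k : ℕ} {h : Heap}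

@[simp]
theorem keys_ofFun : (ofFun K f).keys = K :=
  Finmap.keysLookupEquiv_symm_apply_keys _

@[simp]
theorem lookup_ofFun : (ofFun K f).lookup k = if k ∈ K then some (f k) else none :=
  Finmap.keysLookupEquiv_symm_apply_lookup _ _

theorem mem_ofFun : k ∈ ofFun K f ↔ k ∈ K := by
  rw [← Finmap.mem_keys, keys_ofFun]

theorem mem_restrict : k ∈ h.restrict K ↔ k ∈ K :=
  mem_ofFun

theorem lookup_restrict_of_mem (hK : k ∈ K) (hk : k ∈ h) :
    (h.restrict K).lookup k = h.lookup k := by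
  obtain ⟨v, hv⟩ := Finmap.mem_iff.1 hk
  simp [restrict, hK, hv]

theorem eq_restrict_union_restrict (hK : h.keys = K₁ ∪ K₂) :
    h = h.restrict K₁ ∪ h.restrict K₂ := by
  have hmem : ∀ k, k ∈ h ↔ k ∈ K₁ ∨ k ∈ K₂ := fun k => by
    rw [← Finmap.mem_keys, hK, Finset.mem_union]
  refine Finmap.ext_lookup fun k => ?_
  by_cases hk₁ : k ∈ K₁
  · rw [Finmap.lookup_union_left (mem_restrict.2 hk₁),
      lookup_restrict_of_mem hk₁ ((hmem k).2 (.inl hk₁))]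
  rw [Finmap.lookup_union_right (mt mem_restrict.1 hk₁)]
  by_cases hk₂ : k ∈ K₂
  · rw [lookup_restrict_of_mem hk₂ ((hmem k).2 (.inr hk₂))]
  · rw [Finmap.lookup_eq_none.2 (by simp [hmem, hk₁, hk₂]),
      Finmap.lookup_eq_none.2 (mt mem_restrict.1 hk₂)]

end Heap

namespace Spatial

variable {s s' : Stack} {F G : Spatial} {h h' : Heap} {v : ℕ}

def footprint (s : Stack) : Spatial → Finset ℕ
  | .emp => ∅
  | .pto t _ => {t.eval s}
  | .arr t u => Finset.Icc (t.eval s) (u.eval s)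
  | .star F G => F.footprint s ∪ G.footprint s

theorem keys_eq_footprint (hF : F.sat s h) : h.keys = F.footprint s := by
  induction F generalizing h with
  | emp => rw [hF]; rfl
  | pto t u => exact hF.1
  | arr t u => exact hF.2
  | star F G ihF ihG =>
    obtain ⟨h₁, h₂, -, rfl, hF, hG⟩ := hF
    rw [Finmap.keys_union, ihF hF, ihG hG]; rfl

theorem lookup_of_sat (hF : F.sat s h) {p : Trm × Trm} (hp : p ∈ F.ptos) :
    h.lookup (p.1.eval s) = some (p.2.eval s) := by
  induction F generalizing h with
  | emp | arr _ _ => simp [ptos] at hp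
  | pto t u =>
    obtain rfl : p = (t, u) := List.mem_singleton.1 hp
    exact hF.2
  | star F G ihF ihG =>
    obtain ⟨h₁, h₂, hdisj, rfl, hF, hG⟩ := hF
    rcases List.mem_append.1 hp with hp | hp
    · have hl := ihF hF hp
      rw [Finmap.lookup_union_left (Finmap.mem_of_lookup_eq_some hl), hl]
    · have hl := ihG hG hp
      rw [Finmap.lookup_union_right fun hm => hdisj _ hm (Finmap.mem_of_lookup_eq_some hl), hl]

theorem sat_of_keys_eq (hF : F.sat s h) (hkeys : h'.keys = h.keys)
    (hlookup : ∀ p ∈ F.ptos, h'.lookup (p.1.eval s) = some (p.2.eval s)) : F.sat s h' := by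
  induction F generalizing h h' with
  | emp =>
    subst hF
    exact Finmap.ext_lookup fun k => Finmap.lookup_eq_none.2 fun hk => by
      simpa [hkeys] using Finmap.mem_keys.2 hk
  | pto t u => exact ⟨hkeys.trans hF.1, hlookup (t, u) (List.mem_singleton_self _)⟩
  | arr t u => exact ⟨hF.1, hkeys.trans hF.2⟩
  | star F G ihF ihG =>
    obtain ⟨h₁, h₂, hdisj, rfl, hF, hG⟩ := hF
    rw [Finmap.keys_union] at hkeys
    refine ⟨h'.restrict h₁.keys, h'.restrict h₂.keys, fun k hk₁ hk₂ => ?_,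
      Heap.eq_restrict_union_restrict hkeys, ihF hF Heap.keys_ofFun fun p hp => ?_,
      ihG hG Heap.keys_ofFun fun p hp => ?_⟩
    · exact hdisj k (Finmap.mem_keys.1 (Heap.mem_restrict.1 hk₁))
        (Finmap.mem_keys.1 (Heap.mem_restrict.1 hk₂))
    · have hk := Finmap.mem_keys.2 (Finmap.mem_of_lookup_eq_some (lookup_of_sat hF hp))
      rw [Heap.lookup_restrict_of_mem hk
        (Finmap.mem_keys.1 (hkeys ▸ Finset.mem_union_left _ hk))]
      exact hlookup p (List.mem_append_left _ hp)
    · have hk := Finmap.mem_keys.2 (Finmap.mem_of_lookup_eq_some (lookup_of_sat hG hp))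
      rw [Heap.lookup_restrict_of_mem hk
        (Finmap.mem_keys.1 (hkeys ▸ Finset.mem_union_right _ hk))]
      exact hlookup p (List.mem_append_right _ hp)


def ptoAddrs (s : Stack) (F : Spatial) : List ℕ :=
  F.ptos.map fun p => p.1.eval s

theorem ptoAddrs_congr (hs : ∀ x ∈ F.vars, s x = s' x) : F.ptoAddrs s = F.ptoAddrs s' :=
  List.map_congr_left fun _ hp => Trm.eval_congr fun x hx => hs x ((vars_of_mem_ptos hp).1 hx)

theorem sat_overwriteExcept (hF : F.sat s h) (v : ℕ) :
    F.sat s (h.overwriteExcept (F.ptoAddrs s) v) :=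
  sat_of_keys_eq hF Heap.keys_ofFun fun p hp => by
    have hl := lookup_of_sat hF hp
    rw [Heap.overwriteExcept, Heap.lookup_ofFun,
      if_pos (Finmap.mem_keys.2 (Finmap.mem_of_lookup_eq_some hl)),
      if_pos (show p.1.eval s ∈ F.ptoAddrs s from List.mem_map_of_mem hp), hl,
      Option.getD_some]

theorem overwriteExcept_eq_of_sat (hF : F.sat s h) (hF' : F.sat s h') :
    h.overwriteExcept (F.ptoAddrs s) v = h'.overwriteExcept (F.ptoAddrs s) v := by
  rw [Heap.overwriteExcept, Heap.overwriteExcept,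
    (keys_eq_footprint hF).trans (keys_eq_footprint hF').symm]
  congr 1
  funext k
  split_ifs with hk
  · obtain ⟨p, hp, rfl⟩ := List.mem_map.1 hk
    rw [lookup_of_sat hF hp, lookup_of_sat hF' hp]
  · rfl

theorem sat_of_sat_overwriteExcept {keep : List ℕ}
    (hG : G.sat s (h.overwriteExcept keep v)) (hv : ∀ p ∈ G.ptos, p.2.eval s ≠ v) :
    G.sat s h :=
  sat_of_keys_eq hG Heap.keys_ofFun.symm fun p hp => by
    have hl := lookup_of_sat hG hp
    rw [Heap.overwriteExcept, Heap.lookup_ofFun] at hl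
    split_ifs at hl with hk hkeep
    · obtain ⟨b, hb⟩ := Finmap.mem_iff.1 (Finmap.mem_keys.1 hk)
      rw [hb] at hl ⊢
      simpa using hl
    · exact absurd (Option.some_inj.1 hl).symm (hv p hp)

end Spatial

theorem exists_pure_entails_of_entails_exists {P R : SymHeap} {zs : List ℕ}
    (hzP : ∀ z ∈ zs, z ∉ P.vars) (hrhs : ∀ p ∈ R.spatial.ptos, ∀ z ∈ zs, z ∉ p.2.vars)
    (hP : P.Satisfiable) (hPR : ∀ s h, P.sat s h → QSymHeap.sat s h ⟨zs, R⟩) :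
    ∃ π : PureF, (∃ s h, π.sat s ∧ P.sat s h) ∧ ∀ s h, π.sat s → P.sat s h → R.sat s h := by
  obtain ⟨s₀, h₀, hP₀⟩ := hP
  obtain ⟨v, hv⟩ :=
    Infinite.exists_notMem_finset (R.spatial.ptos.map fun p => p.2.eval s₀).toFinset
  have hPg : P.sat s₀ (h₀.overwriteExcept (P.spatial.ptoAddrs s₀) v) :=
    ⟨hP₀.1, Spatial.sat_overwriteExcept hP₀.2 v⟩
  obtain ⟨s₂, hs₂, hR⟩ := hPR s₀ _ hPg
  have hs₂P : ∀ x ∈ P.vars, s₀ x = s₂ x := fun x hx => (hs₂ x fun hz => hzP x hz hx).symm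
  set V := (P.finite_vars.union R.finite_vars).toFinset
  refine ⟨pinned V s₂, ⟨s₂, _, sat_pinned.2 fun _ _ => rfl, (P.sat_congr hs₂P).1 hPg⟩,
    fun s h hπ hPs => ?_⟩
  have hsV : ∀ x ∈ V, s x = s₂ x := sat_pinned.1 hπ
  rw [R.sat_congr fun x hx => hsV x (by simp [V, hx])]
  have hPs₂ := (P.sat_congr fun x hx => hsV x (by simp [V, hx])).1 hPs
  have hP₀s₂ := (P.sat_congr hs₂P).1 hP₀
  have hRh : R.spatial.sat s₂ (h.overwriteExcept (P.spatial.ptoAddrs s₂) v) := by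
    rw [← Spatial.overwriteExcept_eq_of_sat hP₀s₂.2 hPs₂.2,
      ← Spatial.ptoAddrs_congr fun x hx => hs₂P x (.inr hx)]
    exact hR.2
  refine ⟨hR.1, Spatial.sat_of_sat_overwriteExcept hRh fun p hp hpv => hv ?_⟩
  rw [← hpv, List.mem_toFinset]
  exact List.mem_map.2
    ⟨p, hp, Trm.eval_congr fun x hx => (hs₂ x fun hz => hrhs p hp x hz hx).symm⟩

theorem hasBiabductionSolution_of_quantified {A X Q Y : SymHeap} {zs : List ℕ}
    (hzA : ∀ z ∈ zs, z ∉ A.vars) (hzXY : ∀ z ∈ zs, z ∉ X.vars ∧ z ∉ Y.vars)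
    (hrhs : ∀ p ∈ Q.spatial.ptos, ∀ z ∈ zs, z ∉ p.2.vars) (hsat : (A.star X).Satisfiable)
    (hent : ∀ s h, (A.star X).sat s h → QSymHeap.sat s h ⟨zs, Q.star Y⟩) :
    HasBiabductionSolution A Q := by
  have hzAX : ∀ z ∈ zs, z ∉ (A.star X).vars := fun z hz => by
    rw [SymHeap.vars_star, Set.mem_union, not_or]
    exact ⟨hzA z hz, (hzXY z hz).1⟩
  have hrhsQY : ∀ p ∈ (Q.star Y).spatial.ptos, ∀ z ∈ zs, z ∉ p.2.vars := fun p hp z hz => by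
    rcases List.mem_append.1 hp with hp | hp
    · exact hrhs p hp z hz
    · exact fun hzp => (hzXY z hz).2 (.inr ((Spatial.vars_of_mem_ptos hp).2 hzp))
  obtain ⟨π, ⟨s, h, hπ, hAX⟩, hπent⟩ :=
    exists_pure_entails_of_entails_exists hzAX hrhsQY hsat hent
  exact ⟨X.andPure π, Y, ⟨s, h, SymHeap.sat_star_andPure.2 ⟨hπ, hAX⟩⟩,
    fun s h hs => (SymHeap.sat_star_andPure.1 hs).elim (hπent s h)⟩

theorem HasBiabductionSolution.exists_quantified {A Q : SymHeap} {zs : List ℕ}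
    (hzA : ∀ z ∈ zs, z ∉ A.vars) (hAQ : HasBiabductionSolution A Q) :
    ∃ X Y : SymHeap, (∀ z ∈ zs, z ∉ X.vars ∧ z ∉ Y.vars) ∧ (A.star X).Satisfiable ∧
      ∀ s h, (A.star X).sat s h → QSymHeap.sat s h ⟨zs, Q.star Y⟩ := by
  obtain ⟨X, Y, ⟨s₀, h₀, hsat⟩, hent⟩ := hAQ
  set σ := constSubst zs s₀
  have hσA : ∀ s, ∀ x ∈ A.vars, (σ x).eval s = s x := fun s x hx => by
    rw [eval_constSubst, if_neg fun hz => hzA x hz hx]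
  have hσ_idem : ∀ s, (fun x => (σ x).eval fun y => (σ y).eval s) = fun x => (σ x).eval s :=
    fun s => funext fun x => by simp only [σ, eval_constSubst]; split_ifs <;> rfl
  refine ⟨X.subst σ, Y.subst σ, fun z hz => ⟨notMem_vars_subst_constSubst hz X,
    notMem_vars_subst_constSubst hz Y⟩, ⟨s₀, h₀, ?_⟩, fun s h hs => ?_⟩
  · rwa [SymHeap.sat_star_subst (hσA s₀), show (fun x => (σ x).eval s₀) = s₀ from
      funext fun x => by simp only [σ, eval_constSubst, ite_self]]
  · refine ⟨fun x => (σ x).eval s, fun x hx => by simp only [σ, eval_constSubst, if_neg hx],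
      ?_⟩
    rw [SymHeap.sat_star_subst fun x _ => congrFun (hσ_idem s) x, hσ_idem]
    exact hent _ h ((SymHeap.sat_star_subst (hσA s)).1 hs)

/-- Proposition (quantified biabduction): let `A` be quantifier-free and
`B = ∃z⃗. Q` with `Q` quantifier-free, where `z⃗` is disjoint from the variables
of `A` and no variable of `z⃗` occurs on the right-hand side of a points-to in
`Q`. Then `(A, ∃z⃗. Q)` has a biabduction solution (with `X`, `Y` capture-free
w.r.t. `z⃗`) iff `(A, Q)` has one. -/
theorem stmt_13 (A : SymHeap) (zs : List ℕ) (Q : SymHeap)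
    (hzA : ∀ z ∈ zs, z ∉ A.vars)
    (hrhs : ∀ p ∈ Q.spatial.ptos, ∀ z ∈ zs, z ∉ Trm.vars p.2) :
    (∃ X Y : SymHeap,
        (∀ z ∈ zs, z ∉ X.vars ∧ z ∉ Y.vars) ∧
        (A.star X).Satisfiable ∧
        (∀ (s : Stack) (h : Heap), (A.star X).sat s h →
          QSymHeap.sat s h ⟨zs, Q.star Y⟩)) ↔
    (∃ X Y : SymHeap, (A.star X).Satisfiable ∧ Entails (A.star X) (Q.star Y)) :=
  ⟨fun ⟨_, _, hzXY, hsat, hent⟩ =>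
    hasBiabductionSolution_of_quantified hzA hzXY hrhs hsat hent,
    HasBiabductionSolution.exists_quantified hzA⟩
end

section
/- Let A, B be ↦-free symbolic heaps with spatial parts ⊛_{i=1}^n array(a_i,b_i) and ⊛_{j=1}^m array(c_j,d_j), and write φ(A,B) = ∃x. α(x) where α(x) = ⋁_{i=1}^{n} (a_i ≤ x ≤ b_i) ∧ ⋀_{j=1}^{m} (x < c_j ∨ x > d_j). Then φ(A,B) is logically equivalent over ℕ to the quantifier-free formula ⋁_{i_0=1}^{n} α(a_{i_0}) ∨ ⋁_{j_0=1}^{m} α(d_{j_0} + 1): every stack satisfies φ(A,B) iff it satisfies this disjunction. -/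
/-- `α(x)` for `↦`-free `A`, `B` with arrays `array(aᵢ,bᵢ)` and `array(cⱼ,dⱼ)`:
`⋁ᵢ (aᵢ ≤ x ≤ bᵢ) ∧ ⋀ⱼ (x < cⱼ ∨ x > dⱼ)`, evaluated under stack `s`. -/
def alphaSat (n m : ℕ) (a b : Fin n → Trm) (c d : Fin m → Trm)
    (s : Stack) (x : ℕ) : Prop :=
  (∃ i : Fin n, Trm.eval s (a i) ≤ x ∧ x ≤ Trm.eval s (b i)) ∧
  ∀ j : Fin m, x < Trm.eval s (c j) ∨ x > Trm.eval s (d j)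

/-! The least point of a union of intervals minus another union of intervals is either a left
endpoint of the first family, or lies just right of an interval of the second family: one step
to its left we are still inside the first union, so we must have dropped into the second. -/

open Set

section IntervalDifference

variable {ι κ : Type*} (a b : ι → ℕ) (c d : κ → ℕ)

theorem exists_left_eq_or_succ_right_eq_of_isLeast {x : ℕ}
    (hx : IsLeast ((⋃ i, Icc (a i) (b i)) \ ⋃ j, Icc (c j) (d j)) x) :
    (∃ i, a i = x) ∨ ∃ j, d j + 1 = x := by
  obtain ⟨⟨hxA, hxC⟩, hmin⟩ := hx
  obtain ⟨i, hai, hxb⟩ := mem_iUnion.mp hxA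
  rcases hai.eq_or_lt with hax | hax
  · exact .inl ⟨i, hax⟩
  have hpredA : x - 1 ∈ ⋃ i, Icc (a i) (b i) := mem_iUnion.mpr ⟨i, by omega, by omega⟩
  have hpredC : x - 1 ∈ ⋃ j, Icc (c j) (d j) := by
    by_contra h
    have := hmin ⟨hpredA, h⟩
    omega
  obtain ⟨j, hcj, hdj⟩ := mem_iUnion.mp hpredC
  have hxj : x ∉ Icc (c j) (d j) := fun h => hxC (mem_iUnion.mpr ⟨j, h⟩)
  exact .inr ⟨j, by simp only [mem_Icc, not_and_or, not_le] at hxj; omega⟩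

theorem nonempty_iUnion_Icc_diff_iff :
    ((⋃ i, Icc (a i) (b i)) \ ⋃ j, Icc (c j) (d j)).Nonempty ↔
      (∃ i, a i ∈ (⋃ i, Icc (a i) (b i)) \ ⋃ j, Icc (c j) (d j)) ∨
        ∃ j, d j + 1 ∈ (⋃ i, Icc (a i) (b i)) \ ⋃ j, Icc (c j) (d j) := by
  refine ⟨fun hS => ?_, ?_⟩
  · have hmem := (isLeast_csInf hS).1
    rcases exists_left_eq_or_succ_right_eq_of_isLeast a b c d (isLeast_csInf hS) with
      ⟨i, hi⟩ | ⟨j, hj⟩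
    · exact .inl ⟨i, hi ▸ hmem⟩
    · exact .inr ⟨j, hj ▸ hmem⟩
  · rintro (⟨_, h⟩ | ⟨_, h⟩) <;> exact ⟨_, h⟩

end IntervalDifference

theorem alphaSat_iff_mem (n m : ℕ) (a b : Fin n → Trm) (c d : Fin m → Trm) (s : Stack)
    (x : ℕ) :
    alphaSat n m a b c d s x ↔
      x ∈ (⋃ i, Icc ((a i).eval s) ((b i).eval s)) \ ⋃ j, Icc ((c j).eval s) ((d j).eval s) := by
  simp only [alphaSat, mem_sdiff, mem_iUnion, mem_Icc, not_exists, not_and_or, not_le, gt_iff_lt]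

/-- Lemma (quantifier elimination for φ): `φ(A,B) = ∃x. α(x)` is logically
equivalent over ℕ to `⋁_{i₀} α(a_{i₀}) ∨ ⋁_{j₀} α(d_{j₀} + 1)`. -/
theorem stmt_16 (n m : ℕ) (a b : Fin n → Trm) (c d : Fin m → Trm) (s : Stack) :
    (∃ x : ℕ, alphaSat n m a b c d s x) ↔
    ((∃ i₀ : Fin n, alphaSat n m a b c d s (Trm.eval s (a i₀))) ∨
      (∃ j₀ : Fin m, alphaSat n m a b c d s (Trm.eval s (d j₀) + 1))) := by
  simp only [alphaSat_iff_mem]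
  exact nonempty_iUnion_Icc_diff_iff _ _ _ _
end
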